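/- arXiv:2510.20220 — 2 statements merged into one kernel-verified Lean document; each statement's English description precedes it below -/
import Mathlib

section
/- As μ → ∞, the matrix (G^{-1} + μ F F^T)^{-1} converges to G - G F (F^T G F)^{-1} F^T G, provided G is invertible and F^T G F is invertible. -/
open Matrix Filter Topology

theorem smw_limit
    (n p : ℕ) (G : Matrix (Fin n) (Fin n) ℝ) (hG : IsUnit G)
    (F : Matrix (Fin n) (Fin p) ℝ) (hFGF : IsUnit (Fᵀ * G * F)) :
    ∀ i j, Tendsto (fun μ : ℝ => ((G⁻¹ + μ • (F * Fᵀ))⁻¹) i j) atTop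
      (𝓝 ((G - G * F * (Fᵀ * G * F)⁻¹ * Fᵀ * G) i j)) := by
  have hGd : IsUnit G.det := (Matrix.isUnit_iff_isUnit_det G).mp hG
  have hFGFd : IsUnit (Fᵀ * G * F).det := (Matrix.isUnit_iff_isUnit_det _).mp hFGF
  set B : ℝ → Matrix (Fin p) (Fin p) ℝ := fun μ => μ⁻¹ • 1 + Fᵀ * G * F with hBdef
  -- B tends to FᵀGF
  have hB : Tendsto B atTop (𝓝 (Fᵀ * G * F)) := by
    have h1 : Tendsto (fun μ : ℝ => μ⁻¹ • (1 : Matrix (Fin p) (Fin p) ℝ)) atTop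
        (𝓝 ((0 : ℝ) • 1)) :=
      (tendsto_inv_atTop_zero).smul_const _
    have := h1.add (tendsto_const_nhds (x := Fᵀ * G * F))
    simpa using this
  -- eventually B μ is a unit
  have hdet : Tendsto (fun μ => (B μ).det) atTop (𝓝 ((Fᵀ * G * F).det)) :=
    (Continuous.matrix_det continuous_id).continuousAt.tendsto.comp hB
  have hdetne : (Fᵀ * G * F).det ≠ 0 := hFGFd.ne_zero
  have hBunit : ∀ᶠ μ : ℝ in atTop, IsUnit (B μ).det := by
    filter_upwards [hdet.eventually_ne hdetne] with μ h using isUnit_iff_ne_zero.mpr h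
  -- key algebraic identity
  have key : ∀ μ : ℝ, μ ≠ 0 → IsUnit (B μ).det →
      (G⁻¹ + μ • (F * Fᵀ))⁻¹ = G - G * F * (B μ)⁻¹ * Fᵀ * G := by
    intro μ hμ hBu
    apply Matrix.inv_eq_right_inv
    have hBB : B μ * (B μ)⁻¹ = 1 := Matrix.mul_nonsing_inv _ hBu
    have hFGFB : (Fᵀ * G * F) * (B μ)⁻¹ = 1 - μ⁻¹ • (B μ)⁻¹ := by
      have : (Fᵀ * G * F) = B μ - μ⁻¹ • 1 := by simp [hBdef]
      rw [this, Matrix.sub_mul, hBB, Matrix.smul_mul, Matrix.one_mul]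
    have hrw : Fᵀ * (G * (F * ((B μ)⁻¹ * (Fᵀ * G)))) =
        ((Fᵀ * G * F) * (B μ)⁻¹) * (Fᵀ * G) := by
      simp [Matrix.mul_assoc]
    calc (G⁻¹ + μ • (F * Fᵀ)) * (G - G * F * (B μ)⁻¹ * Fᵀ * G)
        = G⁻¹ * G - G⁻¹ * (G * (F * ((B μ)⁻¹ * (Fᵀ * G))))
          + (μ • (F * (Fᵀ * G)) - μ • (F * (Fᵀ * (G * (F * ((B μ)⁻¹ * (Fᵀ * G))))))) := by
          simp [Matrix.add_mul, Matrix.mul_sub, Matrix.smul_mul, Matrix.mul_smul,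
            Matrix.mul_assoc, smul_sub]
          abel
      _ = 1 - F * ((B μ)⁻¹ * (Fᵀ * G))
          + (μ • (F * (Fᵀ * G)) - μ • (F * (((Fᵀ * G * F) * (B μ)⁻¹) * (Fᵀ * G)))) := by
          rw [Matrix.nonsing_inv_mul _ hGd, Matrix.nonsing_inv_mul_cancel_left _ _ hGd, hrw]
      _ = 1 := by
          rw [hFGFB, Matrix.sub_mul, Matrix.one_mul, Matrix.smul_mul, Matrix.mul_sub,
            Matrix.mul_smul, smul_sub, smul_smul, mul_inv_cancel₀ hμ, one_smul]
          simp [Matrix.mul_assoc]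
  -- limit of the RHS
  have hinv : Tendsto (fun μ => (B μ)⁻¹) atTop (𝓝 ((Fᵀ * G * F)⁻¹)) := by
    refine (continuousAt_matrix_inv _ ?_).tendsto.comp hB
    exact NormedRing.inverse_continuousAt hFGFd.unit
  have hRHS : Tendsto (fun μ => G - G * F * (B μ)⁻¹ * Fᵀ * G) atTop
      (𝓝 (G - G * F * (Fᵀ * G * F)⁻¹ * Fᵀ * G)) := by
    have : Continuous fun X : Matrix (Fin p) (Fin p) ℝ => G - G * F * X * Fᵀ * G :=
      continuous_const.sub (((continuous_const.matrix_mul continuous_id).matrix_mul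
        continuous_const).matrix_mul continuous_const)
    exact (this.tendsto _).comp hinv
  have hEq : ∀ᶠ μ : ℝ in atTop,
      (G⁻¹ + μ • (F * Fᵀ))⁻¹ = G - G * F * (B μ)⁻¹ * Fᵀ * G := by
    filter_upwards [hBunit, eventually_gt_atTop (0 : ℝ)] with μ hu hμ
    exact key μ hμ.ne' hu
  have hfull : Tendsto (fun μ : ℝ => (G⁻¹ + μ • (F * Fᵀ))⁻¹) atTop
      (𝓝 (G - G * F * (Fᵀ * G * F)⁻¹ * Fᵀ * G)) :=
    hRHS.congr' (hEq.mono fun μ h => h.symm)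
  intro i j
  exact ((continuous_apply j).comp (continuous_apply i)).continuousAt.tendsto.comp hfull
end

section
/- Let r_s = f^{(s)}/|V_s| for indicator vectors f^{(s)} of a partition into h groups. An indicator matrix H of a clustering satisfies |V_s ∩ C_ℓ|/|V_s| = |V_{s'} ∩ C_ℓ|/|V_{s'}| for all s, s', ℓ if and only if (r_1 - r_s)^T H = 0 for s = 2,...,h. -/
open BigOperators

theorem fairness_iff_linear_constraints
    (n h k : ℕ) (hh : 0 < h)
    (V : Fin h → Finset (Fin n))
    (hdisj : ∀ s s', s ≠ s' → Disjoint (V s) (V s'))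
    (hcover : (Finset.univ : Finset (Fin n)) = Finset.univ.biUnion V)
    (hne : ∀ s, (V s).Nonempty)
    (C : Fin n → Fin k)
    (r : Fin h → Fin n → ℝ)
    (hr : ∀ s i, r s i = (if i ∈ V s then (1:ℝ) else 0) / ((V s).card : ℝ))
    (H : Matrix (Fin n) (Fin k) ℝ)
    (hH : ∀ i ℓ, H i ℓ = if C i = ℓ then 1 else 0) :
    (∀ s s' : Fin h, ∀ ℓ : Fin k,
        ((V s ∩ Finset.univ.filter (fun i => C i = ℓ)).card : ℝ) / ((V s).card : ℝ) =
        ((V s' ∩ Finset.univ.filter (fun i => C i = ℓ)).card : ℝ) / ((V s').card : ℝ)) ↔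
    (∀ s : Fin h, ∀ ℓ : Fin k,
        ∑ i, (r ⟨0, hh⟩ i - r s i) * H i ℓ = 0) := by
  have key : ∀ (s : Fin h) (ℓ : Fin k), ∑ i, r s i * H i ℓ =
      ((V s ∩ Finset.univ.filter (fun i => C i = ℓ)).card : ℝ) / ((V s).card : ℝ) := by
    intro s ℓ
    have : ∀ i, r s i * H i ℓ =
        (if i ∈ V s ∩ Finset.univ.filter (fun i => C i = ℓ) then (1:ℝ) else 0) / ((V s).card : ℝ) := by
      intro i
      rw [hr, hH]
      by_cases h1 : i ∈ V s <;> by_cases h2 : C i = ℓ <;>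
        simp [h1, h2, Finset.mem_inter, Finset.mem_filter]
    simp only [this]
    rw [← Finset.sum_div, Finset.sum_ite_mem, Finset.univ_inter, Finset.sum_const,
      nsmul_eq_mul, mul_one]
  constructor
  · intro hfair s ℓ
    have := hfair ⟨0, hh⟩ s ℓ
    simp only [sub_mul, Finset.sum_sub_distrib, key, this, sub_self]
  · intro hlin s s' ℓ
    have h1 := hlin s ℓ
    have h2 := hlin s' ℓ
    simp only [sub_mul, Finset.sum_sub_distrib, key, sub_eq_zero] at h1 h2
    rw [← h1, ← h2]
end
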